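/- Let h, Ψ: ℝ² → ℝ be integrable, and for σ > 0 let Ψ_σ(u,v) = (1/σ²)Ψ(u/σ, v/σ). With the correlation [h ⋆ g](u,v) = ∫∫ h(u',v') g(u'-u, v'-v) du' dv' and dilation (T_s h)(u,v) = h(u/s, v/s), we have for all s > 0: [(T_s h) ⋆ Ψ_σ](u,v) = (T_s [h ⋆ Ψ_{σ/s}])(u,v). That is, correlating the downscaled image with a filter at scale σ equals downscaling the correlation of the original image with the filter at scale σ/s (scale equivariance of steerable correlation). -/
import Mathlib


open MeasureTheory

/-- Continuous 2D cross-correlation. -/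
noncomputable def corr2 (h Ψ : ℝ → ℝ → ℝ) (u v : ℝ) : ℝ :=
  ∫ q : ℝ × ℝ, h q.1 q.2 * Ψ (q.1 - u) (q.2 - v)

/-- Dilation operator on images. -/
noncomputable def dil (s : ℝ) (h : ℝ → ℝ → ℝ) : ℝ → ℝ → ℝ :=
  fun u v => h (u / s) (v / s)

/-- The scale-normalized filter family. -/
noncomputable def filt (Ψ : ℝ → ℝ → ℝ) (σ : ℝ) : ℝ → ℝ → ℝ :=
  fun u v => (1 / σ ^ 2) * Ψ (u / σ) (v / σ)

/-- Scale equivariance of steerable correlation: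
`[(T_s h) ⋆ Ψ_σ] = T_s [h ⋆ Ψ_{σ/s}]`. -/
theorem corr2_scale_equivariant (h Ψ : ℝ → ℝ → ℝ) (σ s : ℝ)
    (hσ : σ > 0) (hs : s > 0)
    (hh : Integrable (fun q : ℝ × ℝ => h q.1 q.2))
    (hΨ : Integrable (fun q : ℝ × ℝ => Ψ q.1 q.2)) :
    ∀ u v : ℝ,
      corr2 (dil s h) (filt Ψ σ) u v = dil s (corr2 h (filt Ψ (σ / s))) u v := by
  intro u v
  have hs0 : s ≠ 0 := ne_of_gt hs
  have hσ0 : σ ≠ 0 := ne_of_gt hσ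
  set G : ℝ × ℝ → ℝ := fun p =>
    h p.1 p.2 * ((1 / σ ^ 2) * Ψ ((s * p.1 - u) / σ) ((s * p.2 - v) / σ)) with hG
  have key := MeasureTheory.Measure.integral_comp_inv_smul (μ := (volume : Measure (ℝ × ℝ))) G s
  have hL : corr2 (dil s h) (filt Ψ σ) u v = ∫ q : ℝ × ℝ, G (s⁻¹ • q) := by
    simp only [corr2, dil, filt, hG, Prod.smul_fst, Prod.smul_snd, smul_eq_mul]
    congr 1
    funext q
    rw [mul_comm s⁻¹ q.1, mul_comm s⁻¹ q.2]
    congr 2 <;> field_simp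
  have hfr : Module.finrank ℝ (ℝ × ℝ) = 2 := by simp
  have hR : dil s (corr2 h (filt Ψ (σ / s))) u v = s ^ 2 • ∫ q : ℝ × ℝ, G q := by
    rw [← integral_smul]
    simp only [dil, corr2, filt, hG]
    congr 1
    funext p
    have hsd : σ / s ≠ 0 := div_ne_zero hσ0 hs0
    rw [smul_eq_mul]
    have h1 : (p.1 - u / s) / (σ / s) = (s * p.1 - u) / σ := by field_simp
    have h2 : (p.2 - v / s) / (σ / s) = (s * p.2 - v) / σ := by field_simp
    rw [h1, h2]
    field_simp
  rw [hL, key, hfr, hR, abs_of_nonneg (by positivity : (0:ℝ) ≤ s ^ 2)]
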